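/- arXiv:1702.04163 — 3 statements merged into one kernel-verified Lean document; each statement's English description precedes it below -/
import Mathlib

section
/- For every ordinal alpha, the order type of the set of finite subsets of {beta : beta < alpha}, ordered antilexicographically, equals 2^alpha (ordinal exponentiation). -/
open scoped Classical symmDiff

/-- The antilexicographic order on finite sets of ordinals:
`L₁ < L₂` iff the maximum of the symmetric difference belongs to `L₂`. -/
def antilex (L₁ L₂ : Finset Ordinal) : Prop :=
  ∃ h : (L₁ ∆ L₂).Nonempty, (L₁ ∆ L₂).max' h ∈ L₂

/-- `Lset α` is the finite set of exponents appearing in the base-2 Cantor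
normal form of the ordinal `α`. -/
noncomputable def Lset (α : Ordinal) : Finset Ordinal :=
  ((Ordinal.CNF 2 α).map Prod.fst).toFinset

/-!
Send a finite set `{β₁ > ⋯ > βₙ}` of ordinals to `2 ^ β₁ + ⋯ + 2 ^ βₙ`. The antilexicographic
order is Mathlib's colex order on finsets, and this map is strictly monotone for it: if `w` is the
largest element of `s ∆ t` and `w ∈ t`, then `s` and `t` agree above `w`, while the part of `s`
below `w` sums to less than `2 ^ w`, which the part of `t` below `w` already reaches. On sets of
ordinals below `α` the map lands in `2 ^ α`, and it is onto because the base-2 Cantor normal form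
of `o` has all coefficients equal to `1`, so that `Lset o` is a preimage of `o`.
-/

open Finset Ordinal

theorem Finsupp.indicator_const_insert {ι M : Type*} [DecidableEq ι] [AddMonoid M]
    {s : Finset ι} {a : ι} (ha : a ∉ s) (b : M) :
    indicator (insert a s) (fun _ _ ↦ b) = single a b + indicator s fun _ _ ↦ b := by
  ext i
  by_cases hi : i = a
  · subst hi; simp [indicator_of_notMem ha]
  · simp [hi]

/-- `twoPowSum {β₁, …, βₙ} = 2 ^ β₁ + ⋯ + 2 ^ βₙ` for `β₁ > ⋯ > βₙ`. -/
noncomputable def twoPowSum (s : Finset Ordinal) : Ordinal :=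
  CNF.eval 2 (Finsupp.indicator s fun _ _ ↦ 1)

section twoPowSum

variable {s t : Finset Ordinal} {a : Ordinal}

theorem twoPowSum_empty : twoPowSum ∅ = 0 := by
  have : (Finsupp.indicator ∅ fun _ _ ↦ 1 : Ordinal →₀ Ordinal) = 0 := by ext; simp
  rw [twoPowSum, this, CNF.eval_zero_right]

theorem twoPowSum_insert (h : ∀ b ∈ s, b < a) :
    twoPowSum (insert a s) = 2 ^ a + twoPowSum s := by
  rw [twoPowSum, Finsupp.indicator_const_insert (fun ha ↦ (h a ha).false),
    CNF.eval_single_add' _ fun b hb ↦ h b (Finsupp.support_indicator_subset _ _ hb), mul_one,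
    twoPowSum]

theorem twoPowSum_union (h : ∀ a ∈ s, ∀ b ∈ t, b < a) :
    twoPowSum (s ∪ t) = twoPowSum s + twoPowSum t := by
  induction s using Finset.induction_on_max with
  | empty => rw [empty_union, twoPowSum_empty, zero_add]
  | insert a s hs ih =>
    have hst : ∀ b ∈ s ∪ t, b < a := by
      simp only [mem_union]
      rintro b (hb | hb)
      exacts [hs b hb, h a (mem_insert_self a s) b hb]
    rw [insert_union, twoPowSum_insert hst, twoPowSum_insert hs,
      ih fun c hc ↦ h c (mem_insert_of_mem hc), add_assoc]

theorem twoPowSum_lt_two_opow (h : ∀ b ∈ s, b < a) : twoPowSum s < 2 ^ a := by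
  refine CNF.eval_lt (fun e ↦ ?_) fun b hb ↦ h b (Finsupp.support_indicator_subset _ _ hb)
  rw [Finsupp.indicator_apply]
  split_ifs <;> norm_num

theorem two_opow_le_twoPowSum (ha : a ∈ s) (h : ∀ b ∈ s, b ≤ a) : 2 ^ a ≤ twoPowSum s := by
  rw [← insert_erase ha, twoPowSum_insert fun b hb ↦ (h b (mem_of_mem_erase hb)).lt_of_ne
    (ne_of_mem_erase hb)]
  exact le_self_add

theorem twoPowSum_eq_add_filter (s : Finset Ordinal) (w : Ordinal) :
    twoPowSum s = twoPowSum {a ∈ s | w < a} + twoPowSum {a ∈ s | ¬w < a} := by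
  conv_lhs => rw [← filter_union_filter_not_eq (w < ·) s]
  refine twoPowSum_union fun a ha b hb ↦ ?_
  exact (not_lt.1 (mem_filter.1 hb).2).trans_lt (mem_filter.1 ha).2

theorem twoPowSum_ofColex_strictMono : StrictMono fun s : Colex (Finset Ordinal) ↦
    twoPowSum (ofColex s) := by
  intro s t hst
  obtain ⟨w, hw, hhigh⟩ :=
    (Colex.lt_iff_exists_filter_lt (s := ofColex s) (t := ofColex t)).1 hst
  obtain ⟨hwt, hws⟩ := mem_sdiff.1 hw
  have hlow_s : twoPowSum {a ∈ ofColex s | ¬w < a} < 2 ^ w := by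
    refine twoPowSum_lt_two_opow fun b hb ↦ ?_
    obtain ⟨hbs, hbw⟩ := mem_filter.1 hb
    exact (not_lt.1 hbw).lt_of_ne fun h ↦ hws (h ▸ hbs)
  have hlow_t : 2 ^ w ≤ twoPowSum {a ∈ ofColex t | ¬w < a} :=
    two_opow_le_twoPowSum (mem_filter.2 ⟨hwt, lt_irrefl w⟩) fun b hb ↦
      not_lt.1 (mem_filter.1 hb).2
  calc twoPowSum (ofColex s)
      = twoPowSum {a ∈ ofColex s | w < a} + twoPowSum {a ∈ ofColex s | ¬w < a} :=
        twoPowSum_eq_add_filter _ w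
    _ < twoPowSum {a ∈ ofColex t | w < a} + 2 ^ w := by rw [hhigh]; gcongr
    _ ≤ twoPowSum {a ∈ ofColex t | w < a} + twoPowSum {a ∈ ofColex t | ¬w < a} := by gcongr
    _ = twoPowSum (ofColex t) := (twoPowSum_eq_add_filter _ w).symm

theorem indicator_one_Lset (o : Ordinal) :
    (Finsupp.indicator (Lset o) fun _ _ ↦ 1) = CNF.coeff 2 o := by
  ext e
  by_cases he : e ∈ Lset o
  · obtain ⟨x, hx, rfl⟩ := List.mem_map.1 (List.mem_toFinset.1 he)
    rw [Finsupp.indicator_of_mem he, CNF.coeff_of_mem_CNF hx]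
    exact le_antisymm (Order.one_le_iff_pos.2 (CNF.snd_pos hx))
      (Order.lt_add_one_iff.1 (one_add_one_eq_two (R := Ordinal) ▸ CNF.snd_lt one_lt_two hx))
  · rw [Finsupp.indicator_of_notMem he, CNF.coeff_of_notMem_CNF (mt List.mem_toFinset.2 he)]

theorem twoPowSum_Lset (o : Ordinal) : twoPowSum (Lset o) = o := by
  rw [twoPowSum, indicator_one_Lset, CNF.eval_coeff]

theorem lt_of_mem_Lset {o a b : Ordinal} (ho : o < 2 ^ a) (hb : b ∈ Lset o) : b < a := by
  rw [Lset, ← CNF.support_coeff, Finsupp.mem_support_iff] at hb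
  by_contra! hab
  exact hb (CNF.coeff_eq_zero_of_lt (ho.trans_le (opow_le_opow_right two_pos hab)))

theorem antilex_iff_toColex_lt : antilex s t ↔ toColex s < toColex t := by
  rw [Colex.toColex_lt_toColex_iff_max'_mem, antilex]
  exact ⟨fun ⟨h, hm⟩ ↦ ⟨symmDiff_nonempty.1 h, hm⟩, fun ⟨h, hm⟩ ↦ ⟨symmDiff_nonempty.2 h, hm⟩⟩

theorem twoPowSum_lt_twoPowSum_iff :
    twoPowSum s < twoPowSum t ↔ toColex s < toColex t :=
  twoPowSum_ofColex_strictMono.lt_iff_lt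

theorem twoPowSum_injective : Function.Injective twoPowSum :=
  twoPowSum_ofColex_strictMono.injective.comp toColex.injective

end twoPowSum

noncomputable def antilexIsoIio (α : Ordinal) :
    (fun L₁ L₂ : {s : Finset Ordinal // ∀ β ∈ s, β < α} ↦ antilex L₁.1 L₂.1) ≃r
      ((· < ·) : Set.Iio ((2 : Ordinal) ^ α) → Set.Iio ((2 : Ordinal) ^ α) → Prop) where
  toEquiv := Equiv.ofBijective (fun s ↦ ⟨twoPowSum s.1, twoPowSum_lt_two_opow s.2⟩)
    ⟨fun _ _ h ↦ Subtype.ext (twoPowSum_injective (congrArg Subtype.val h)),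
      fun o ↦ ⟨⟨Lset o, fun _ ↦ lt_of_mem_Lset o.2⟩, Subtype.ext (twoPowSum_Lset o)⟩⟩
  map_rel_iff' := twoPowSum_lt_twoPowSum_iff.trans antilex_iff_toColex_lt.symm

/-- The order type of the finite subsets of `{β | β < α}`, ordered
antilexicographically, is `2 ^ α` (ordinal exponentiation). -/
theorem type_antilex_eq_two_opow (α : Ordinal) :
    ∃ hwo : IsWellOrder {s : Finset Ordinal // ∀ β ∈ s, β < α}
        (fun L₁ L₂ => antilex L₁.1 L₂.1),
      @Ordinal.type {s : Finset Ordinal // ∀ β ∈ s, β < α} (fun L₁ L₂ => antilex L₁.1 L₂.1) hwo = Ordinal.lift.{1,0} ((2 : Ordinal) ^ α) := by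
  have := (antilexIsoIio α).toRelEmbedding.isWellOrder
  exact ⟨this, (antilexIsoIio α).ordinalType_congr.trans (type_lt_Iio _)⟩
end

section
/- The map alpha ↦ L_alpha is an order isomorphism from the ordinals with their usual order onto the finite sets of ordinals with the antilexicographic order (L1 < L2 iff max(L1 △ L2) ∈ L2). -/
open scoped Classical symmDiff

/-! Antilex is Mathlib's colex order on `Finset Ordinal`. Every `β ≠ 0` is `2 ^ e + β'` with
`e = log 2 β` and `β' < 2 ^ e`, and then `L_β = insert e L_β'`; moreover `α < 2 ^ e` iff every
exponent of `α` is below `e`. Strict monotonicity follows by induction on `β`: either `α < 2 ^ e`,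
and `L_α` lies below `{e} ⊆ L_β`, or `α` has the same leading term, which can be stripped from
both sides. For surjectivity, a finite set with maximum `a` is hit by `2 ^ a + α`, where `α`
hits the rest of the set. -/

open Ordinal Finset Colex

theorem antilex_iff_toColex_lt_s9 {L₁ L₂ : Finset Ordinal} :
    antilex L₁ L₂ ↔ toColex L₁ < toColex L₂ := by
  rw [toColex_lt_toColex_iff_max'_mem, antilex]
  exact ⟨fun ⟨h, hmem⟩ ↦ ⟨symmDiff_nonempty.1 h, hmem⟩,
    fun ⟨h, hmem⟩ ↦ ⟨symmDiff_nonempty.2 h, hmem⟩⟩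

theorem Finset.Colex.toColex_insert_lt_toColex_insert {α : Type*} [LinearOrder α] {a : α}
    {s t : Finset α} (hs : a ∉ s) (ht : a ∉ t) :
    toColex (insert a s) < toColex (insert a t) ↔ toColex s < toColex t := by
  rw [← toColex_sdiff_lt_toColex_sdiff (u := {a}) (by simp) (by simp),
    sdiff_singleton_eq_erase, sdiff_singleton_eq_erase, erase_insert hs, erase_insert ht]

@[simp]
theorem Lset_zero : Lset 0 = ∅ := by simp [Lset]

theorem Lset_two_opow_add {e α : Ordinal} (h : α < 2 ^ e) :
    Lset (2 ^ e + α) = insert e (Lset α) := by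
  simpa [Lset] using congrArg (fun l ↦ (l.map Prod.fst).toFinset)
    (CNF.opow_mul_add one_lt_two one_ne_zero one_lt_two h)

theorem le_log_of_mem_Lset {e α : Ordinal} (h : e ∈ Lset α) : e ≤ log 2 α := by
  simp only [Lset, List.mem_toFinset, List.mem_map] at h
  obtain ⟨x, hx, rfl⟩ := h
  exact CNF.fst_le_log hx

theorem log_mem_Lset {α : Ordinal} (h : α ≠ 0) : log 2 α ∈ Lset α := by
  simp [Lset, CNF.ne_zero h]

theorem lt_two_opow_iff_forall_mem_Lset_lt {α e : Ordinal} :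
    α < 2 ^ e ↔ ∀ x ∈ Lset α, x < e := by
  rcases eq_or_ne α 0 with rfl | hα
  · simp [opow_pos]
  rw [lt_opow_iff_log_lt one_lt_two hα]
  exact ⟨fun h x hx ↦ (le_log_of_mem_Lset hx).trans_lt h, fun h ↦ h _ (log_mem_Lset hα)⟩

theorem sub_two_opow_log_lt {α β : Ordinal} (h : α ≤ β) : α - 2 ^ log 2 β < 2 ^ log 2 β := by
  refine sub_lt_of_lt_add ?_ (opow_pos _ two_pos)
  calc α ≤ β := h
    _ < 2 ^ Order.succ (log 2 β) := lt_opow_succ_log_self one_lt_two β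
    _ = 2 ^ log 2 β + 2 ^ log 2 β := by rw [opow_succ, ← one_add_one_eq_two, mul_add, mul_one]

theorem Lset_strictMono : StrictMono fun α ↦ toColex (Lset α) := by
  intro α β hαβ
  dsimp only
  induction β using WellFoundedLT.induction generalizing α with
  | _ β ih =>
  have hβ : β ≠ 0 := hαβ.ne_bot
  set e := log 2 β
  have hβe : 2 ^ e + (β - 2 ^ e) = β := Ordinal.add_sub_cancel_of_le (opow_log_le_self 2 hβ)
  have hβ' : β - 2 ^ e < 2 ^ e := sub_two_opow_log_lt le_rfl
  have hLβ : Lset β = insert e (Lset (β - 2 ^ e)) := by rw [← Lset_two_opow_add hβ', hβe]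
  rcases lt_or_ge α (2 ^ e) with hα | hα
  · refine (toColex_lt_singleton.2 (lt_two_opow_iff_forall_mem_Lset_lt.1 hα)).trans_le ?_
    exact toColex_le_toColex_of_subset (by simp [hLβ])
  · have hαe : 2 ^ e + (α - 2 ^ e) = α := Ordinal.add_sub_cancel_of_le hα
    have hα' : α - 2 ^ e < 2 ^ e := sub_two_opow_log_lt hαβ.le
    have hlt : α - 2 ^ e < β - 2 ^ e := by
      rwa [← hαe, ← hβe, add_lt_add_iff_left] at hαβ
    have hnotMem {γ : Ordinal} (hγ : γ < 2 ^ e) : e ∉ Lset γ :=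
      fun h ↦ (lt_two_opow_iff_forall_mem_Lset_lt.1 hγ e h).false
    rw [hLβ, ← hαe, Lset_two_opow_add hα',
      toColex_insert_lt_toColex_insert (hnotMem hα') (hnotMem hβ')]
    exact ih _ (hβ'.trans_le (opow_log_le_self 2 hβ)) hlt

theorem Lset_surjective : Function.Surjective Lset := by
  intro s
  induction s using Finset.induction_on_max with
  | empty => exact ⟨0, Lset_zero⟩
  | insert a s hlt ih =>
    obtain ⟨α, rfl⟩ := ih
    exact ⟨2 ^ a + α, Lset_two_opow_add (lt_two_opow_iff_forall_mem_Lset_lt.2 hlt)⟩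

/-- `α ↦ L_α` is an order isomorphism from the ordinals with their usual order
onto the finite sets of ordinals with the antilexicographic order. -/
theorem Lset_orderIso :
    Function.Bijective Lset ∧ ∀ α β : Ordinal, α < β ↔ antilex (Lset α) (Lset β) :=
  ⟨⟨Lset_strictMono.injective.of_comp, Lset_surjective⟩,
    fun _ _ ↦ Lset_strictMono.lt_iff_lt.symm.trans antilex_iff_toColex_lt_s9.symm⟩
end

section
/- The family consisting of all sets D(eta,h) = {alpha : for all k < eta, k ◁ alpha iff eta*h + k ◁ alpha} (for eta = 2^eta a fixed point and h an ordinal) together with all cones C(beta) = {alpha : L_beta ⊆ L_alpha} has the finite intersection property: every finite subfamily has nonempty intersection. -/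
open scoped Classical symmDiff

/-- Formal inclusion: `α ⊑ β` iff `L_α ⊆ L_β`. -/
def fincl (α β : Ordinal) : Prop := Lset α ⊆ Lset β

/-- Formal membership: `β ◁ α` iff `2^β` appears in the base-2 normal form of `α`. -/
def fmem (β α : Ordinal) : Prop := β ∈ Lset α

/-! Sort the fixed points `η₁ > ⋯ > ηₙ` occurring in the family. Since `η = 2 ^ η`, each of them
divides the larger ones, so every ordinal has mixed-radix digits with respect to them. Let `E` be
the finite set of ordinals each of whose digits is `0` or the corresponding digit of one of
finitely many generators: the exponents of the cones' vertices and the translations `ηᵢ * h`.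
Adding `ηᵢ * h` to `k < ηᵢ` replaces the digits of `k` above level `i`, all `0`, by those of
`ηᵢ * h`, so `k ∈ E ↔ ηᵢ * h + k ∈ E`. The ordinal whose base-2 normal form has exponent set `E`
lies in every member of the family. -/

namespace Ordinal

theorem dvd_mod_of_dvd {η c ν : Ordinal} (hc : η ∣ c) (hν : η ∣ ν) : η ∣ c % ν :=
  (dvd_add_iff (dvd_mul_of_dvd_left hν _)).1 (by rwa [div_add_mod])

theorem add_le_of_dvd_of_lt {η r ν : Ordinal} (hr : η ∣ r) (hν : η ∣ ν) (h : r < ν) :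
    r + η ≤ ν := by
  obtain ⟨s, rfl⟩ := hr
  obtain ⟨t, rfl⟩ := hν
  have hst : s + 1 ≤ t := Order.add_one_le_of_lt (lt_of_mul_lt_mul_left' h)
  calc η * s + η = η * (s + 1) := by rw [mul_add, mul_one]
    _ ≤ η * t := mul_le_mul_right hst η

theorem mod_add_lt_of_dvd {η c ν k : Ordinal} (hν0 : ν ≠ 0) (hc : η ∣ c) (hν : η ∣ ν)
    (hk : k < η) : c % ν + k < ν :=
  (add_lt_add_right hk _).trans_le
    (add_le_of_dvd_of_lt (dvd_mod_of_dvd hc hν) hν (mod_lt c hν0))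

theorem add_div_of_dvd {η c ν k : Ordinal} (hc : η ∣ c) (hν : η ∣ ν) (hk : k < η) :
    (c + k) / ν = c / ν := by
  rcases eq_or_ne ν 0 with rfl | hν0
  · simp
  have hck : c + k = ν * (c / ν) + (c % ν + k) := by rw [← add_assoc, div_add_mod]
  rw [hck, mul_add_div _ hν0, div_eq_zero_of_lt (mod_add_lt_of_dvd hν0 hc hν hk), add_zero]

theorem add_mod_of_dvd {η c ν k : Ordinal} (hc : η ∣ c) (hν : η ∣ ν) (hk : k < η) :
    (c + k) % ν = c % ν + k := by
  rcases eq_or_ne ν 0 with rfl | hν0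
  · simp
  have hck : c + k = ν * (c / ν) + (c % ν + k) := by rw [← add_assoc, div_add_mod]
  rw [hck, mul_add_mod_self, mod_eq_of_lt (mod_add_lt_of_dvd hν0 hc hν hk)]

theorem dvd_of_opow_eq_self {b x y : Ordinal} (hx : b ^ x = x) (hy : b ^ y = y) (hxy : x ≤ y) :
    x ∣ y := by
  rw [← hx, ← hy]
  exact opow_dvd_opow b hxy

end Ordinal

open Ordinal

theorem exists_Lset_eq (E : Finset Ordinal.{u}) : ∃ α, Lset α = E := by
  let f : Ordinal.{u} →₀ Ordinal.{u} := Finsupp.indicator E fun _ _ => 1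
  have hf : ∀ e, f e < 2 := by
    intro e
    simp only [f, Finsupp.indicator_apply]
    split_ifs <;> norm_num
  refine ⟨CNF.eval 2 f, ?_⟩
  rw [Lset, ← CNF.support_coeff, CNF.coeff_eval one_lt_two hf]
  ext e
  simp [f, Finsupp.indicator_apply]

def digitSet : List Ordinal → Finset Ordinal → Set Ordinal
  | [], G => insert 0 ↑G
  | ν :: L, G =>
      {x | x / ν ∈ insert 0 (G.image (· / ν)) ∧ x % ν ∈ digitSet L (G.image (· % ν))}

theorem digitSet_finite (L : List Ordinal) (G : Finset Ordinal) : (digitSet L G).Finite := by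
  induction L generalizing G with
  | nil => exact (Finset.finite_toSet G).insert 0
  | cons ν L ih =>
    have hinj : Function.Injective fun x : Ordinal => (x / ν, x % ν) := fun x y hxy => by
      obtain ⟨hdiv, hmod⟩ := Prod.mk.inj hxy
      rw [← div_add_mod x ν, ← div_add_mod y ν, hdiv, hmod]
    exact (((insert 0 (G.image (· / ν))).finite_toSet.prod (ih _)).preimage hinj.injOn :)

theorem subset_digitSet (L : List Ordinal) (G : Finset Ordinal) : ↑G ⊆ digitSet L G := by
  induction L generalizing G with
  | nil => exact Set.subset_insert 0 _
  | cons ν L ih =>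
    exact fun g hg => ⟨Finset.mem_insert_of_mem (Finset.mem_image_of_mem _ hg),
      ih _ (Finset.mem_image_of_mem _ hg)⟩

theorem add_mem_digitSet_iff {L : List Ordinal} {G : Finset Ordinal} {η c k : Ordinal}
    (hL : L.Pairwise (fun a b => b ∣ a)) (hη : η ∈ L) (hc : c ∈ G) (hηc : η ∣ c) (hk : k < η) :
    c + k ∈ digitSet L G ↔ k ∈ digitSet L G := by
  induction L generalizing G c with
  | nil => exact absurd hη List.not_mem_nil
  | cons ν L ih =>
    have hην : η ∣ ν := by
      rcases List.mem_cons.1 hη with rfl | hηL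
      exacts [dvd_rfl, List.rel_of_pairwise_cons hL hηL]
    have hk_div := add_div_of_dvd (dvd_zero η) hην hk
    have hk_mod := add_mod_of_dvd (dvd_zero η) hην hk
    rw [zero_add, zero_div] at hk_div
    rw [zero_add, zero_mod, zero_add] at hk_mod
    simp only [digitSet, Set.mem_ofPred_eq, add_div_of_dvd hηc hην hk, add_mod_of_dvd hηc hην hk,
      hk_div, hk_mod, Finset.mem_insert_self, true_and,
      Finset.mem_insert_of_mem (Finset.mem_image_of_mem _ hc)]
    rcases List.mem_cons.1 hη with rfl | hηL
    · rw [mod_eq_zero_of_dvd hηc, zero_add]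
    · exact ih hL.of_cons hηL (Finset.mem_image_of_mem _ hc) (dvd_mod_of_dvd hηc hην)

theorem exists_Lset_superset_translation_closed (P : Finset (Ordinal × Ordinal))
    (hP : ∀ p ∈ P, (2 : Ordinal) ^ p.1 = p.1) (B : Finset Ordinal) :
    ∃ α, B ⊆ Lset α ∧ ∀ p ∈ P, ∀ k < p.1, (fmem k α ↔ fmem (p.1 * p.2 + k) α) := by
  set L := (P.image Prod.fst).sort (· ≥ ·)
  set G := B ∪ P.image fun p => p.1 * p.2
  have hL : L.Pairwise fun a b => b ∣ a := by
    have hfix : ∀ μ ∈ L, (2 : Ordinal) ^ μ = μ := by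
      intro μ hμ
      obtain ⟨p, hp, rfl⟩ := Finset.mem_image.1 ((Finset.mem_sort _).1 hμ)
      exact hP p hp
    exact (List.sortedGT_iff_pairwise.1 (Finset.sortedGT_sort _)).imp_of_mem
      fun ha hb hab => dvd_of_opow_eq_self (hfix _ hb) (hfix _ ha) hab.le
  obtain ⟨α, hα⟩ := exists_Lset_eq (digitSet_finite L G).toFinset
  refine ⟨α, fun b hb => ?_, fun p hp k hk => ?_⟩
  · rw [hα, Set.Finite.mem_toFinset]
    exact subset_digitSet L G (Finset.mem_union_left _ hb)
  · simp only [fmem, hα, Set.Finite.mem_toFinset]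
    exact (add_mem_digitSet_iff hL ((Finset.mem_sort _).2 (Finset.mem_image_of_mem _ hp))
      (Finset.mem_union_right _ (Finset.mem_image_of_mem _ hp)) (dvd_mul_right _ _) hk).symm

/-- The family of all sets `D(η,h)` (for fixed points `η = 2^η`) together with
all cones `C(β)` has the finite intersection property. -/
theorem fip_complete_and_cones :
    ∀ 𝒜 : Finset (Set Ordinal),
      (↑𝒜 : Set (Set Ordinal)) ⊆
        ({S | ∃ η h : Ordinal, (2 : Ordinal) ^ η = η ∧
            S = {α | ∀ k < η, (fmem k α ↔ fmem (η * h + k) α)}} ∪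
          {S | ∃ β : Ordinal, S = {α | Lset β ⊆ Lset α}}) →
      ∃ α : Ordinal, ∀ S ∈ 𝒜, α ∈ S := by
  intro 𝒜 h𝒜
  have hdata : ∀ S ∈ 𝒜, ∃ η h β : Ordinal,
      ((2 : Ordinal) ^ η = η ∧ S = {α | ∀ k < η, (fmem k α ↔ fmem (η * h + k) α)}) ∨
        S = {α | Lset β ⊆ Lset α} := by
    intro S hS
    rcases h𝒜 hS with ⟨η, h, hη, rfl⟩ | ⟨β, rfl⟩
    exacts [⟨η, h, 0, Or.inl ⟨hη, rfl⟩⟩, ⟨0, 0, β, Or.inr rfl⟩]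
  -- The components not selected by the disjunction are dummies: extra constraints do no harm.
  choose! η h β hS using hdata
  obtain ⟨α, hB, hP⟩ := exists_Lset_superset_translation_closed
    ((𝒜.image fun S => (η S, h S)).filter fun p => (2 : Ordinal) ^ p.1 = p.1)
    (fun p hp => (Finset.mem_filter.1 hp).2) (𝒜.biUnion fun S => Lset (β S))
  refine ⟨α, fun S hS' => ?_⟩
  rcases hS S hS' with ⟨hη, hD⟩ | hC
  · rw [hD]
    exact hP (η S, h S) (Finset.mem_filter.2 ⟨Finset.mem_image_of_mem _ hS', hη⟩)
  · rw [hC]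
    exact (Finset.subset_biUnion_of_mem _ hS').trans hB
end
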